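/- Let $G$ be a compact subgroup of $O(N)$ acting on functions by $(g_* v)(x) = v(g^{-1}x)$, and let $I$ be a $G$-invariant $C^1$ functional on a Banach space $E$ of functions on $\mathbb{R}^N$ on which $G$ acts by isometries, with $G$-invariant subspace $E_G$. If $(u_n) \subset E_G$ satisfies $I'(u_n) \to 0$ in the dual of $E_G$, then $I'(u_n) \to 0$ in the dual of $E$. -/

import Mathlib

open Filter Topology MeasureTheory

noncomputable section

/-!
Averaging over the normalized Haar measure `μ` of `G` gives a map `P v = ∫ g, ρ g v ∂μ` into
the invariant vectors with `‖P v‖ ≤ ‖v‖`. At an invariant point `u`, differentiating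
`I ∘ ρ g = I` shows that `I'(u)` is `G`-invariant, hence `I'(u) v = I'(u) (P v)`, so `‖I'(u)‖`
is bounded by the norm of its restriction to `E_G`.
-/

theorem HasFDerivAt.apply_map_eq_of_comp_eq {𝕜 E F : Type*} [NontriviallyNormedField 𝕜]
    [NormedAddCommGroup E] [NormedSpace 𝕜 E] [NormedAddCommGroup F] [NormedSpace 𝕜 F]
    {I : E → F} {f : E →L[𝕜] F} {w : E} (hI : HasFDerivAt I f w) (L : E ≃L[𝕜] E)
    (hL : I ∘ L = I) (hw : L w = w) (v : E) : f (L v) = f v := by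
  have hIL : HasFDerivAt (I ∘ L) (f.comp (L : E →L[𝕜] E)) w :=
    (hw.symm ▸ hI).comp w L.hasFDerivAt
  rw [hL] at hIL
  exact congr($(hIL.unique hI) v)

theorem isProbabilityMeasure_haarMeasure_top (G : Type*) [Group G] [TopologicalSpace G]
    [IsTopologicalGroup G] [CompactSpace G] [MeasurableSpace G] [BorelSpace G] :
    IsProbabilityMeasure (Measure.haarMeasure (⊤ : TopologicalSpace.PositiveCompacts G)) := by
  constructor
  rw [← TopologicalSpace.PositiveCompacts.coe_top (α := G)]
  exact Measure.haarMeasure_self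

section OrbitAverage

variable {E F : Type*} [NormedAddCommGroup E] [NormedSpace ℝ E] [NormedAddCommGroup F]
  [NormedSpace ℝ F]
  {G : Type*} [Group G] [MeasurableSpace G] (μ : Measure G) (ρ : G →* (E ≃ₗᵢ[ℝ] E))

def orbitAverage (v : E) : E := ∫ g, ρ g v ∂μ

theorem norm_orbitAverage_le [IsProbabilityMeasure μ] (v : E) : ‖orbitAverage μ ρ v‖ ≤ ‖v‖ := by
  simpa [orbitAverage] using norm_integral_le_of_norm_le_const (μ := μ) (C := ‖v‖)
    (Eventually.of_forall fun g => ((ρ g).norm_map v).le)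

variable [CompleteSpace E] [CompleteSpace F]

theorem map_orbitAverage [MeasurableMul G] [μ.IsMulLeftInvariant] (g : G) (v : E) :
    ρ g (orbitAverage μ ρ v) = orbitAverage μ ρ v := by
  calc ρ g (∫ h, ρ h v ∂μ) = ∫ h, ρ g (ρ h v) ∂μ :=
        ((ρ g).toLinearIsometry.integral_comp_comm _).symm
    _ = ∫ h, ρ (g * h) v ∂μ := by simp only [map_mul, LinearIsometryEquiv.coe_mul,
        Function.comp_apply]
    _ = ∫ h, ρ h v ∂μ := integral_mul_left_eq_self (fun h => ρ h v) g

variable [TopologicalSpace G] [CompactSpace G] [OpensMeasurableSpace G] [IsProbabilityMeasure μ]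
  {ρ}

theorem apply_orbitAverage_of_invariant (hcont : ∀ v : E, Continuous fun g => ρ g v)
    {f : E →L[ℝ] F} (hf : ∀ g v, f (ρ g v) = f v) (v : E) : f (orbitAverage μ ρ v) = f v := by
  rw [orbitAverage, ← f.integral_comp_comm
    ((hcont v).integrable_of_hasCompactSupport (HasCompactSupport.of_compactSpace _))]
  simp [hf]

theorem opNorm_le_opNorm_comp_subtypeL_of_invariant (hcont : ∀ v : E, Continuous fun g => ρ g v)
    [MeasurableMul G] [μ.IsMulLeftInvariant] {f : E →L[ℝ] F} (hf : ∀ g v, f (ρ g v) = f v)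
    (S : Submodule ℝ E) (hS : ∀ w, (∀ g, ρ g w = w) → w ∈ S) : ‖f‖ ≤ ‖f.comp S.subtypeL‖ := by
  refine f.opNorm_le_bound (f.comp S.subtypeL).opNorm_nonneg fun v => ?_
  set P : S := ⟨orbitAverage μ ρ v, hS _ (map_orbitAverage μ ρ · v)⟩
  calc ‖f v‖ = ‖f.comp S.subtypeL P‖ := by
        rw [← apply_orbitAverage_of_invariant μ hcont hf v]; rfl
    _ ≤ ‖f.comp S.subtypeL‖ * ‖P‖ := (f.comp S.subtypeL).le_opNorm P
    _ ≤ ‖f.comp S.subtypeL‖ * ‖v‖ := by gcongr; exact norm_orbitAverage_le μ ρ v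

end OrbitAverage

/-- Principle of symmetric criticality for Palais–Smale sequences: let `G` be a compact
topological group acting on a Banach space `E` by linear isometries (continuously in the
group variable), `I : E → ℝ` a `G`-invariant `C¹` functional with derivative `I'`, and
`E_G` the subspace of `G`-invariant vectors. If `(uₙ) ⊂ E_G` and `I'(uₙ) → 0` in the dual
of `E_G` (i.e. the restriction of `I'(uₙ)` to `E_G` tends to `0` in norm), then
`I'(uₙ) → 0` in the dual of `E`. -/
theorem stmt13 {E : Type*} [NormedAddCommGroup E] [NormedSpace ℝ E] [CompleteSpace E]
    {G : Type*} [Group G] [TopologicalSpace G] [IsTopologicalGroup G] [CompactSpace G]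
    [MeasurableSpace G] [BorelSpace G]
    (ρ : G →* (E ≃ₗᵢ[ℝ] E)) (hcont : ∀ v : E, Continuous fun g => ρ g v)
    (I : E → ℝ) (I' : E → E →L[ℝ] ℝ) (hI : ∀ u, HasFDerivAt I (I' u) u)
    (hinv : ∀ g : G, ∀ u : E, I (ρ g u) = I u)
    (EG : Submodule ℝ E) (hEG : ∀ u : E, u ∈ EG ↔ ∀ g : G, ρ g u = u)
    (u : ℕ → E) (hu : ∀ n, u n ∈ EG)
    (h0 : Tendsto (fun n => ‖(I' (u n)).comp EG.subtypeL‖) atTop (𝓝 0)) :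
    Tendsto (fun n => ‖I' (u n)‖) atTop (𝓝 0) := by
  have := isProbabilityMeasure_haarMeasure_top G
  refine squeeze_zero (fun n => norm_nonneg _) (fun n => ?_) h0
  refine opNorm_le_opNorm_comp_subtypeL_of_invariant (Measure.haarMeasure ⊤) hcont
    (fun g v => ?_) EG fun w hw => (hEG w).2 hw
  exact (hI (u n)).apply_map_eq_of_comp_eq (ρ g).toContinuousLinearEquiv (funext (hinv g))
    ((hEG _).1 (hu n) g) v
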